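/- For the colored permutation group G_{r,n} = Z_r ≀ S_n with r ≥ 1 and n ≥ 1, the signed generating function over colored derangements satisfies ∑_{π ∈ D_{r,n}} q^{exc(π)} (−1)^{cyc(π)} = −q·[r]_q^n·[n−1]_q, where D_{r,n} is the set of π = (σ, z) with σ(i) ≠ i for all i. -/

import Mathlib

open Finset Polynomial

/-- `exc_A` for a colored permutation `π = (z, σ) ∈ ℤ_r ≀ S_n`. -/
def excAc {r n : ℕ} (π : (Fin n → ZMod r) × Equiv.Perm (Fin n)) : ℕ :=
  (Finset.univ.filter fun i => (π.1 i).val = 0 ∧ i < π.2 i).card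

/-- `csum`: the sum of the colors (taken as representatives in `{0,…,r−1}`). -/
def csumc {r n : ℕ} (π : (Fin n → ZMod r) × Equiv.Perm (Fin n)) : ℕ :=
  ∑ i, (π.1 i).val

/-- The excedance number `exc(π) = r·exc_A(π) + csum(π)`. -/
def excc {r n : ℕ} (π : (Fin n → ZMod r) × Equiv.Perm (Fin n)) : ℕ :=
  r * excAc π + csumc π

/-- Number of cycles of the underlying permutation, counting fixed points. -/
def cyc {n : ℕ} (σ : Equiv.Perm (Fin n)) : ℕ :=
  (Finset.univ.filter fun i => σ i = i).card + σ.cycleType.card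

/-!
Summing over the colourings first, each letter `i` contributes `[r]_q`, multiplied by `q` when
`i` is an excedance of `σ` (the colour `0` then weighs `q^r` instead of `1`); so the colours
contribute `q^{exc σ} [r]_q^n`. Since `(-1)^{cyc σ} = (-1)^n sign σ`, what remains is `(-1)^n`
times the determinant `D_n` of the `n × n` matrix with `q` below the diagonal, `1` above it and
`0` on it. Subtracting from each row the previous one and expanding along the last column gives
`D_{n+1} = (-1)^n q^n - D_n`, whence `D_{n+1} = (-1)^n q [n]_q`.
-/

open Equiv

lemma neg_one_pow_cyc {R : Type*} [CommRing R] {n : ℕ} (σ : Perm (Fin n)) :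
    (-1 : R) ^ cyc σ = (-1) ^ n * (Perm.sign σ : R) := by
  have hfix : (-1 : R) ^ n = (-1) ^ (#{i | σ i = i} + σ.cycleType.sum) := by
    rw [Perm.sum_cycleType, Perm.support, card_filter_add_card_filter_not, card_fin]
  rw [Perm.sign_of_cycleType, cyc, hfix]
  push_cast
  ring_nf
  simp [pow_mul']

section DerangementMatrix

variable {R : Type*} [CommRing R]

def derangementMatrix (n : ℕ) (x : R) : Matrix (Fin n) (Fin n) R :=
  Matrix.of fun i j => if j < i then x else if i < j then 1 else 0

lemma prod_derangementMatrix_perm {n : ℕ} (x : R) (σ : Perm (Fin n)) :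
    ∏ i, derangementMatrix n x (σ i) i
      = if ∀ i, σ i ≠ i then x ^ #{i | i < σ i} else 0 := by
  split_ifs with hσ
  · have hentry (i : Fin n) : derangementMatrix n x (σ i) i = if i < σ i then x else 1 := by
      rcases (hσ i).lt_or_gt with h | h <;> simp [derangementMatrix, h, h.not_gt]
    simp only [hentry, prod_ite, prod_const, one_pow, mul_one]
  · push Not at hσ
    obtain ⟨i, hi⟩ := hσ
    exact prod_eq_zero (mem_univ i) (by simp [derangementMatrix, hi])

lemma det_derangementMatrix_eq_sum (n : ℕ) (x : R) :
    (derangementMatrix n x).det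
      = ∑ σ : Perm (Fin n) with ∀ i, σ i ≠ i, (Perm.sign σ : R) * x ^ #{i | i < σ i} := by
  simp only [Matrix.det_apply', prod_derangementMatrix_perm, mul_ite, mul_zero, sum_ite,
    sum_const_zero, add_zero]

/-- Row `0` of `derangementMatrix n x`, followed by the differences of consecutive rows. -/
def derangementMatrixRowDiff (n : ℕ) (x : R) : Matrix (Fin n) (Fin n) R :=
  Matrix.of fun i j => if (i : ℕ) = 0 then (if (j : ℕ) = 0 then 0 else 1)
    else if (j : ℕ) + 1 = i then x else if (j : ℕ) = i then -1 else 0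

lemma det_derangementMatrix_eq_det_derangementMatrixRowDiff (n : ℕ) (x : R) :
    (derangementMatrix (n + 1) x).det = (derangementMatrixRowDiff (n + 1) x).det := by
  refine Matrix.det_eq_of_forall_row_eq_smul_add_pred (fun _ => 1) (fun j => ?_) (fun i j => ?_)
  · simp [derangementMatrix, derangementMatrixRowDiff, Fin.pos_iff_ne_zero]
  · simp only [derangementMatrix, derangementMatrixRowDiff, Matrix.of_apply, Fin.lt_def,
      Fin.val_succ, Fin.val_castSucc, Nat.add_one_ne_zero, ↓reduceIte, one_mul]
    split_ifs <;> first | ring1 | (exfalso; omega)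

lemma derangementMatrixRowDiff_submatrix_castSucc (n : ℕ) (x : R) :
    (derangementMatrixRowDiff (n + 1) x).submatrix Fin.castSucc Fin.castSucc
      = derangementMatrixRowDiff n x := by
  ext i j
  simp only [derangementMatrixRowDiff, Matrix.submatrix_apply, Matrix.of_apply, Fin.val_castSucc]

lemma det_derangementMatrixRowDiff_submatrix_succ_castSucc (n : ℕ) (x : R) :
    ((derangementMatrixRowDiff (n + 1) x).submatrix Fin.succ Fin.castSucc).det = x ^ n := by
  rw [Matrix.det_of_isUpperTriangular]
  · simp [derangementMatrixRowDiff]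
  · intro i j (hij : j < i)
    simp only [derangementMatrixRowDiff, Matrix.submatrix_apply, Matrix.of_apply, Fin.val_succ,
      Fin.val_castSucc, Fin.lt_def, Nat.add_one_ne_zero, ↓reduceIte] at hij ⊢
    split_ifs <;> first | rfl | omega

lemma det_derangementMatrixRowDiff (n : ℕ) (x : R) :
    (derangementMatrixRowDiff (n + 1) x).det = (-1) ^ n * x * ∑ i ∈ range n, x ^ i := by
  induction n with
  | zero => simp [derangementMatrixRowDiff]
  | succ n ih =>
    rw [Matrix.det_succ_column _ (Fin.last _), Fintype.sum_eq_add 0 (Fin.last _) (by simp)]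
    · have h0 : derangementMatrixRowDiff (n + 2) x 0 (Fin.last _) = 1 := by
        simp [derangementMatrixRowDiff]
      have hlast : derangementMatrixRowDiff (n + 2) x (Fin.last _) (Fin.last _) = -1 := by
        simp [derangementMatrixRowDiff]
      rw [Fin.succAbove_zero, Fin.succAbove_last,
        det_derangementMatrixRowDiff_submatrix_succ_castSucc,
        derangementMatrixRowDiff_submatrix_castSucc, ih, h0, hlast, Fin.val_zero, Fin.val_last,
        Even.neg_one_pow ⟨n + 1, rfl⟩, sum_range_succ]
      ring
    · rintro i ⟨hi0, hilast⟩
      simp only [ne_eq, Fin.ext_iff, Fin.val_zero, Fin.val_last] at hi0 hilast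
      have : (i : ℕ) < n + 2 := i.isLt
      simp only [derangementMatrixRowDiff, Matrix.of_apply, Fin.val_last]
      rw [if_neg hi0, if_neg (by omega), if_neg (by omega), mul_zero, zero_mul]

lemma det_derangementMatrix (n : ℕ) (x : R) :
    (derangementMatrix (n + 1) x).det = (-1) ^ n * x * ∑ i ∈ range n, x ^ i := by
  rw [det_derangementMatrix_eq_det_derangementMatrixRowDiff, det_derangementMatrixRowDiff]

lemma sum_derangements_neg_one_pow_cyc (n : ℕ) (x : R) :
    ∑ σ : Perm (Fin (n + 1)) with ∀ i, σ i ≠ i, (-1 : R) ^ cyc σ * x ^ #{i | i < σ i}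
      = -(x * ∑ i ∈ range n, x ^ i) := by
  have hdet := det_derangementMatrix n x
  rw [det_derangementMatrix_eq_sum] at hdet
  simp only [neg_one_pow_cyc, mul_assoc, ← mul_sum, hdet]
  rw [← mul_assoc, ← mul_assoc, ← pow_add, Odd.neg_one_pow ⟨n, by ring⟩]
  ring

end DerangementMatrix

lemma ZMod.sum_comp_val {M : Type*} [AddCommMonoid M] (r : ℕ) [NeZero r] (f : ℕ → M) :
    ∑ c : ZMod r, f c.val = ∑ j ∈ range r, f j := by
  obtain ⟨k, rfl⟩ := Nat.exists_eq_succ_of_ne_zero (NeZero.ne r)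
  exact Fin.sum_univ_eq_sum_range f (k + 1)

section Colors

variable {R : Type*} [CommSemiring R]

lemma sum_range_pow_ite_zero (x : R) (r : ℕ) :
    ∑ j ∈ range r, x ^ ((if j = 0 then r else 0) + j) = x * ∑ j ∈ range r, x ^ j := by
  cases r with
  | zero => simp
  | succ k =>
    rw [sum_range_succ', mul_sum, sum_range_succ]
    simp [pow_succ', add_comm]

lemma sum_zmod_pow_ite_val_eq_zero (r : ℕ) [NeZero r] (x : R) (P : Prop) [Decidable P] :
    ∑ c : ZMod r, x ^ ((if c.val = 0 ∧ P then r else 0) + c.val)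
      = (if P then x else 1) * ∑ j ∈ range r, x ^ j := by
  rw [ZMod.sum_comp_val r fun j => x ^ ((if j = 0 ∧ P then r else 0) + j)]
  split_ifs with hP
  · simpa only [hP, and_true] using sum_range_pow_ite_zero x r
  · simp [hP]

lemma excc_eq_sum {r n : ℕ} (π : (Fin n → ZMod r) × Perm (Fin n)) :
    excc π = ∑ i, ((if (π.1 i).val = 0 ∧ i < π.2 i then r else 0) + (π.1 i).val) := by
  rw [excc, excAc, csumc, card_filter, mul_sum, ← sum_add_distrib]
  simp only [mul_ite, mul_one, mul_zero]

lemma sum_colorings_pow_excc (r : ℕ) [NeZero r] {n : ℕ} (x : R) (σ : Perm (Fin n)) :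
    ∑ z : Fin n → ZMod r, x ^ excc (z, σ)
      = x ^ #{i | i < σ i} * (∑ j ∈ range r, x ^ j) ^ n := by
  simp only [excc_eq_sum, ← prod_pow_eq_pow_sum]
  rw [← Fintype.prod_sum fun i (c : ZMod r) =>
    x ^ ((if c.val = 0 ∧ i < σ i then r else 0) + c.val)]
  simp only [sum_zmod_pow_ite_val_eq_zero, prod_mul_distrib, prod_ite, prod_const, one_pow,
    mul_one, card_univ, Fintype.card_fin]

end Colors

theorem signed_exc_sum_colored_derangements (r n : ℕ) [NeZero r] (hn : 1 ≤ n) :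
    ∑ π ∈ Finset.univ.filter
        (fun π : (Fin n → ZMod r) × Equiv.Perm (Fin n) => ∀ i, π.2 i ≠ i),
        (-1 : Polynomial ℚ) ^ cyc π.2 * X ^ excc π
      = -((X : Polynomial ℚ) * (∑ i ∈ Finset.range r, X ^ i) ^ n *
          ∑ i ∈ Finset.range (n - 1), X ^ i) := by
  obtain ⟨m, rfl⟩ : ∃ m, n = m + 1 := ⟨n - 1, by omega⟩
  rw [← univ_product_univ, filter_product_right fun σ : Perm (Fin (m + 1)) => ∀ i, σ i ≠ i,
    sum_product_right]
  simp only [← mul_sum, sum_colorings_pow_excc, ← mul_assoc, ← sum_mul,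
    sum_derangements_neg_one_pow_cyc, Nat.add_sub_cancel]
  ring
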